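/- For all real numbers c > 0 and m with 1 < m < 3, the function x ↦ (1 − e^{−cx²})/x^m is Lebesgue integrable on (0,∞) and ∫_0^∞ (1 − e^{−cx²})/x^m dx = −(c^{(m−1)/2}/2) Γ((1−m)/2), where Γ is the Gamma function (note that Γ((1−m)/2) < 0 for 1 < m < 3, so the right-hand side is positive). -/

import Mathlib

open MeasureTheory Real Set Filter Topology

/-!
For `0 < p` and `1 < m < p + 1` integrate by parts against
`F x = (1 - exp (-(c * x ^ p))) * x ^ (1 - m) / (1 - m)`, which vanishes at `0` and at `∞`.
Its derivative is the integrand plus `c p / (1 - m) · x ^ (p - m) e^{-c x ^ p}`, whose integral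
is `Γ((p + 1 - m) / p)` up to powers of `c` and `p`; the recurrence `Γ(s + 1) = s Γ(s)` at
`s = (1 - m) / p` then yields the value for the original integrand.
-/

lemma one_sub_exp_neg_nonneg {t : ℝ} (ht : 0 ≤ t) : 0 ≤ 1 - exp (-t) :=
  sub_nonneg.mpr (exp_le_one_iff.mpr (neg_nonpos.mpr ht))

lemma one_sub_exp_neg_le (t : ℝ) : 1 - exp (-t) ≤ t := by
  linarith [one_sub_le_exp_neg t]

section

variable {c p m x : ℝ}

lemma one_sub_exp_div_rpow_nonneg (hc : 0 ≤ c) (hx : 0 < x) :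
    0 ≤ (1 - exp (-(c * x ^ p))) / x ^ m :=
  div_nonneg (one_sub_exp_neg_nonneg (by positivity)) (rpow_nonneg hx.le m)

lemma one_sub_exp_div_rpow_le_mul_rpow (hx : 0 < x) :
    (1 - exp (-(c * x ^ p))) / x ^ m ≤ c * x ^ (p - m) := by
  rw [div_le_iff₀ (rpow_pos_of_pos hx m), mul_assoc, ← rpow_add hx, sub_add_cancel]
  exact one_sub_exp_neg_le _

lemma one_sub_exp_div_rpow_le_rpow_neg (hx : 0 < x) :
    (1 - exp (-(c * x ^ p))) / x ^ m ≤ x ^ (-m) := by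
  rw [rpow_neg hx.le, ← one_div]
  exact div_le_div_of_nonneg_right (by linarith [exp_pos (-(c * x ^ p))]) (rpow_nonneg hx.le m)

lemma integrableOn_Ioi_one_sub_exp_div_rpow (hc : 0 ≤ c) (hm1 : 1 < m) (hm2 : m < p + 1) :
    IntegrableOn (fun x => (1 - exp (-(c * x ^ p))) / x ^ m) (Ioi 0) := by
  have hmeas : AEStronglyMeasurable (fun x => (1 - exp (-(c * x ^ p))) / x ^ m) :=
    (by fun_prop : Measurable fun x => (1 - exp (-(c * x ^ p))) / x ^ m).aestronglyMeasurable
  rw [← Ioc_union_Ioi_eq_Ioi zero_le_one]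
  refine IntegrableOn.union ?_ ?_
  · have hbound : IntegrableOn (fun x => c * x ^ (p - m)) (Ioc 0 1) :=
      ((intervalIntegrable_iff_integrableOn_Ioc_of_le zero_le_one).mp
        (intervalIntegral.intervalIntegrable_rpow' (by linarith))).const_mul c
    refine hbound.mono' hmeas.restrict ?_
    filter_upwards [ae_restrict_mem measurableSet_Ioc] with x ⟨hx, _⟩
    rw [norm_of_nonneg (one_sub_exp_div_rpow_nonneg hc hx)]
    exact one_sub_exp_div_rpow_le_mul_rpow hx
  · refine (integrableOn_Ioi_rpow_of_lt (by linarith : -m < -1) one_pos).mono' hmeas.restrict ?_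
    filter_upwards [ae_restrict_mem measurableSet_Ioi] with x (hx : 1 < x)
    rw [norm_of_nonneg (one_sub_exp_div_rpow_nonneg hc (one_pos.trans hx))]
    exact one_sub_exp_div_rpow_le_rpow_neg (one_pos.trans hx)

lemma hasDerivAt_one_sub_exp_mul_rpow_div (hm : m ≠ 1) (hx : 0 < x) :
    HasDerivAt (fun x => (1 - exp (-(c * x ^ p))) * x ^ (1 - m) / (1 - m))
      ((1 - exp (-(c * x ^ p))) / x ^ m + c * p / (1 - m) * (x ^ (p - m) * exp (-c * x ^ p))) x := by
  have hexp : HasDerivAt (fun x => 1 - exp (-(c * x ^ p)))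
      (exp (-(c * x ^ p)) * (c * (p * x ^ (p - 1)))) x := by
    simpa using ((hasDerivAt_rpow_const (Or.inl hx.ne')).const_mul c).neg.exp.const_sub 1
  refine ((hexp.mul (hasDerivAt_rpow_const (p := 1 - m) (Or.inl hx.ne'))).div_const
    (1 - m)).congr_deriv ?_
  have h1m : (1 : ℝ) - m ≠ 0 := sub_ne_zero.mpr hm.symm
  rw [sub_sub_cancel_left, rpow_neg hx.le, neg_mul, show p - m = (p - 1) + (1 - m) by ring,
    rpow_add hx]
  field_simp
  ring

lemma tendsto_one_sub_exp_mul_rpow_atTop (hc : 0 ≤ c) (hm : 1 < m) :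
    Tendsto (fun x => (1 - exp (-(c * x ^ p))) * x ^ (1 - m)) atTop (𝓝 0) := by
  have hpow : Tendsto (fun x : ℝ => x ^ (1 - m)) atTop (𝓝 0) := by
    simpa using tendsto_rpow_neg_atTop (sub_pos.mpr hm)
  refine squeeze_zero' ?_ ?_ hpow
  · filter_upwards [eventually_ge_atTop 0] with x hx
    exact mul_nonneg (one_sub_exp_neg_nonneg (by positivity)) (rpow_nonneg hx _)
  · filter_upwards [eventually_ge_atTop 0] with x hx
    exact mul_le_of_le_one_left (rpow_nonneg hx _) (by linarith [exp_pos (-(c * x ^ p))])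

lemma tendsto_one_sub_exp_mul_rpow_nhdsGT_zero (hc : 0 ≤ c) (hm : m < p + 1) :
    Tendsto (fun x => (1 - exp (-(c * x ^ p))) * x ^ (1 - m)) (𝓝[>] 0) (𝓝 0) := by
  have hpow : Tendsto (fun x : ℝ => c * x ^ (p + 1 - m)) (𝓝[>] 0) (𝓝 0) := by
    have h := ((continuousAt_rpow_const 0 (p + 1 - m) (Or.inr (by linarith))).tendsto.mono_left
      (nhdsWithin_le_nhds (s := Ioi 0))).const_mul c
    rwa [zero_rpow (by linarith), mul_zero] at h
  refine squeeze_zero' ?_ ?_ hpow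
  · filter_upwards [self_mem_nhdsWithin] with x (hx : 0 < x)
    exact mul_nonneg (one_sub_exp_neg_nonneg (by positivity)) (rpow_nonneg hx.le _)
  · filter_upwards [self_mem_nhdsWithin] with x (hx : 0 < x)
    rw [add_sub_assoc, rpow_add hx, ← mul_assoc]
    exact mul_le_mul_of_nonneg_right (one_sub_exp_neg_le _) (rpow_nonneg hx.le _)

theorem integral_one_sub_exp_div_rpow (hc : 0 < c) (hp : 0 < p) (hm1 : 1 < m)
    (hm2 : m < p + 1) :
    ∫ x in Ioi 0, (1 - exp (-(c * x ^ p))) / x ^ m =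
      -(c ^ ((m - 1) / p) / p) * Gamma ((1 - m) / p) := by
  set F : ℝ → ℝ := fun x => (1 - exp (-(c * x ^ p))) * x ^ (1 - m) / (1 - m)
  have h1m : (1 : ℝ) - m ≠ 0 := by linarith
  have hF0 : F 0 = 0 := by simp [F, zero_rpow h1m]
  have hcont : ContinuousWithinAt F (Ici 0) 0 := by
    rw [← continuousWithinAt_Ioi_iff_Ici, ContinuousWithinAt, hF0]
    simpa using (tendsto_one_sub_exp_mul_rpow_nhdsGT_zero hc.le hm2).div_const (1 - m)
  have hlim : Tendsto F atTop (𝓝 0) := by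
    simpa using (tendsto_one_sub_exp_mul_rpow_atTop (p := p) hc.le hm1).div_const (1 - m)
  have hint_g := integrableOn_Ioi_one_sub_exp_div_rpow hc.le hm1 hm2
  have hint_h : IntegrableOn (fun x => c * p / (1 - m) * (x ^ (p - m) * exp (-c * x ^ p)))
      (Ioi 0) :=
    (integrableOn_rpow_mul_exp_neg_mul_rpow (by linarith) hp hc).const_mul _
  have hFTC := integral_Ioi_of_hasDerivAt_of_tendsto hcont
    (fun x hx => hasDerivAt_one_sub_exp_mul_rpow_div (by linarith) hx) (hint_g.add hint_h) hlim
  rw [integral_add hint_g hint_h, integral_const_mul,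
    integral_rpow_mul_exp_neg_mul_rpow hp (by linarith) hc, hF0, sub_zero] at hFTC
  have hGamma : Gamma ((p - m + 1) / p) = (1 - m) / p * Gamma ((1 - m) / p) := by
    rw [show (p - m + 1) / p = (1 - m) / p + 1 by field_simp; ring,
      Gamma_add_one (div_ne_zero h1m hp.ne')]
  have hpow : c * c ^ (-(p - m + 1) / p) = c ^ ((m - 1) / p) := by
    nth_rw 1 [← rpow_one c]
    rw [← rpow_add hc]
    congr 1
    field_simp
    ring
  rw [eq_neg_of_add_eq_zero_left hFTC, hGamma, ← hpow]
  field_simp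

end

/-- for `c > 0` and `1 < m < 3`, the function `x ↦ (1 − e^{−cx²})/x^m` is
Lebesgue integrable on `(0,∞)` and
`∫_0^∞ (1 − e^{−cx²})/x^m dx = −(c^{(m−1)/2}/2) Γ((1−m)/2)`. -/
theorem stmt6 (c m : ℝ) (hc : 0 < c) (hm1 : 1 < m) (hm2 : m < 3) :
    IntegrableOn (fun x : ℝ => (1 - Real.exp (-(c * x ^ 2))) / x ^ m) (Set.Ioi 0) ∧
      ∫ x in Set.Ioi (0 : ℝ), (1 - Real.exp (-(c * x ^ 2))) / x ^ m =
        -(c ^ ((m - 1) / 2) / 2) * Real.Gamma ((1 - m) / 2) := by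
  have hm2' : m < 2 + 1 := by linarith
  have hint := integrableOn_Ioi_one_sub_exp_div_rpow hc.le hm1 hm2'
  have hval := integral_one_sub_exp_div_rpow hc two_pos hm1 hm2'
  simp only [rpow_two] at hint hval
  exact ⟨hint, hval⟩
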